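/- Let μ = res_K(v_{a,δ}) for some (a,δ) ∈ K̄×Λ, and let m ∈ ℕ. Then for every closed ball B ⊆ K̄ with B ⊇ B(a,δ) and deg_K B = m, there exists a closed ball B' = B(b',γ') with B ⊇ B' ⊇ B(a,δ), deg_K B' = m, and such that B' is μ-optimal, i.e., ε_μ(p_K(c)) = γ' for some c ∈ Min_K B'. (In other words, the μ-optimal balls of degree m are cofinal, with respect to descending inclusion, among all closed balls of degree m containing B(a,δ).) -/

import Mathlib

open Polynomial

noncomputable section

variable {K Λ : Type*} [Field K] [AddCommGroup Λ] [LinearOrder Λ] [IsOrderedAddMonoid Λ]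

/-- `v` is a `Λ∪{∞}`-valued valuation (written additively) on the algebraic closure of `K`
with trivial support: `v b = ⊤ ↔ b = 0`. -/
structure IsValOnField (v : AlgebraicClosure K → WithTop Λ) : Prop where
  map_mul : ∀ a b, v (a * b) = v a + v b
  min_le_add : ∀ a b, min (v a) (v b) ≤ v (a + b)
  eq_top_iff : ∀ a, v a = ⊤ ↔ a = 0

/-- A valuation on `K[x]` with trivial support whose restriction to `K` is `v`. -/
structure IsValOnPoly (v : AlgebraicClosure K → WithTop Λ)
    (μ : Polynomial K → WithTop Λ) : Prop where
  map_mul : ∀ f g, μ (f * g) = μ f + μ g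
  min_le_add : ∀ f g, min (μ f) (μ g) ≤ μ (f + g)
  eq_top_iff : ∀ f, μ f = ⊤ ↔ f = 0
  extends_v : ∀ c : K, μ (C c) = v (algebraMap K (AlgebraicClosure K) c)

/-- A valuation on `K̄[x]` with trivial support whose restriction to `K̄` is `v`. -/
structure IsValOnPolyBar (v : AlgebraicClosure K → WithTop Λ)
    (ν : Polynomial (AlgebraicClosure K) → WithTop Λ) : Prop where
  map_mul : ∀ f g, ν (f * g) = ν f + ν g
  min_le_add : ∀ f g, min (ν f) (ν g) ≤ ν (f + g)
  eq_top_iff : ∀ f, ν f = ⊤ ↔ f = 0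
  extends_v : ∀ c : AlgebraicClosure K, ν (C c) = v c

/-- Restriction `res_K(ν)` of a valuation `ν` on `K̄[x]` to `K[x]`. -/
def resK (ν : Polynomial (AlgebraicClosure K) → WithTop Λ) :
    Polynomial K → WithTop Λ :=
  fun f => ν (f.map (algebraMap K (AlgebraicClosure K)))

/-- The monomial valuation `v_{a,δ}` on `K̄[x]`:
`v_{a,δ}(Σ c_k (x−a)^k) = min_k (v(c_k) + kδ)`. -/
def monoVal (v : AlgebraicClosure K → WithTop Λ) (a : AlgebraicClosure K) (δ : Λ) :
    Polynomial (AlgebraicClosure K) → WithTop Λ :=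
  fun f => (Finset.range (f.natDegree + 1)).inf
    fun k => v ((taylor a f).coeff k) + ((k • δ : Λ) : WithTop Λ)

/-- The closed ball `B(a,δ) = {b ∈ K̄ : v(b−a) ≥ δ}`. -/
def cBall (v : AlgebraicClosure K → WithTop Λ) (a : AlgebraicClosure K) (δ : Λ) :
    Set (AlgebraicClosure K) := {b | (δ : WithTop Λ) ≤ v (b - a)}

/-- The open ball `B°(a,δ) = {b ∈ K̄ : v(b−a) > δ}`. -/
def oBall (v : AlgebraicClosure K → WithTop Λ) (a : AlgebraicClosure K) (δ : Λ) :
    Set (AlgebraicClosure K) := {b | (δ : WithTop Λ) < v (b - a)}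

/-- The decomposition group `𝒟 = {σ ∈ Aut(K̄/K) : v ∘ σ = v}`. -/
def decompGroup (v : AlgebraicClosure K → WithTop Λ) :
    Set (AlgebraicClosure K ≃ₐ[K] AlgebraicClosure K) := {σ | ∀ a, v (σ a) = v a}

/-- `deg_K c`, the degree of the minimal polynomial of `c` over `K`. -/
def degK (K : Type*) [Field K] (c : AlgebraicClosure K) : ℕ := (minpoly K c).natDegree

/-- `deg_K S = min {deg_K c : c ∈ S}`. -/
def degKSet (K : Type*) [Field K] (S : Set (AlgebraicClosure K)) : ℕ := sInf (degK K '' S)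

/-- `Min_K S = {c ∈ S : deg_K c = deg_K S}`. -/
def MinK (K : Type*) [Field K] (S : Set (AlgebraicClosure K)) : Set (AlgebraicClosure K) :=
  {c ∈ S | degK K c = degKSet K S}

/-- Pointwise order on valuations on a polynomial ring. -/
def valLE {R : Type*} [Semiring R] (μ η : Polynomial R → WithTop Λ) : Prop := ∀ f, μ f ≤ η f

/-- Strict pointwise order on valuations. -/
def valLT {R : Type*} [Semiring R] (μ η : Polynomial R → WithTop Λ) : Prop := valLE μ η ∧ μ ≠ η

/-- `Λ` is a divisible group. -/
def IsDivisible (Λ : Type*) [AddCommGroup Λ] : Prop :=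
  ∀ (γ : Λ) (n : ℕ), 0 < n → ∃ γ', n • γ' = γ

/-- `IsEpsilon μ f e` says that `e = ε_μ(f) = max {(μ(f) − μ(∂_s f))/s : s ≥ 1, ∂_s f ≠ 0}`,
where `∂_s` is the `s`-th Hasse–Schmidt derivative. It is expressed without division:
`μ f ≤ s•e + μ(∂_s f)` for all admissible `s`, with equality for at least one `s`. -/
def IsEpsilon (μ : Polynomial K → WithTop Λ) (f : Polynomial K) (e : Λ) : Prop :=
  (∀ s : ℕ, 1 ≤ s → hasseDeriv s f ≠ 0 →
      μ f ≤ ((s • e : Λ) : WithTop Λ) + μ (hasseDeriv s f)) ∧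
  (∃ s : ℕ, 1 ≤ s ∧ hasseDeriv s f ≠ 0 ∧
      μ f = ((s • e : Λ) : WithTop Λ) + μ (hasseDeriv s f))

/-- `Q` is an abstract key polynomial for `μ`: `Q` is monic and `ε_μ(f) < ε_μ(Q)` for every
nonconstant `f` of degree smaller than `deg Q`. -/
def IsAbstractKeyPol (μ : Polynomial K → WithTop Λ) (Q : Polynomial K) : Prop :=
  Q.Monic ∧ ∀ f : Polynomial K, 0 < f.natDegree → f.natDegree < Q.natDegree →
    ∀ e eQ : Λ, IsEpsilon μ f e → IsEpsilon μ Q eQ → e < eQ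

/-!
Write `ν = v_{a,δ}`. For every `c`, `ν((x - c) h) = min(v(c - a), δ) + ν(h)`, and an induction
over the linear factors of `p = p_K(c₀)` over `K̄`, tracking the largest slope of
`s ↦ ν(∂_s p)`, shows that `ε_ν(p)` is `γ = max min(v(c - a), δ)` over the roots `c` of `p`,
attained at some conjugate `c'` of `c₀`. Take `c₀ ∈ Min_K B` and `B' = B(a, γ)`: it contains
`B(a, δ)` as `γ ≤ δ`, lies in `B` since either `γ = δ` or `ε ≤ v(c₀ - a) ≤ γ`, and has degree
`m` because it contains `c'`, which has the same degree as `c₀`.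
-/

set_option linter.unusedSectionVars false

namespace IsValOnField

variable {v : AlgebraicClosure K → WithTop Λ}

theorem map_zero (hv : IsValOnField v) : v 0 = ⊤ := (hv.eq_top_iff 0).2 rfl

theorem map_one (hv : IsValOnField v) : v 1 = 0 := by
  have h1 : v 1 ≠ ⊤ := fun h => one_ne_zero ((hv.eq_top_iff 1).1 h)
  lift v 1 to Λ using h1 with x hx
  have hxx : ((x + x : Λ) : WithTop Λ) = x := by rw [WithTop.coe_add, hx, ← hv.map_mul, one_mul]
  exact_mod_cast add_eq_left.1 (WithTop.coe_injective hxx)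

def toAddValuation (hv : IsValOnField v) : AddValuation (AlgebraicClosure K) (WithTop Λ) :=
  AddValuation.of v hv.map_zero hv.map_one hv.min_le_add hv.map_mul

theorem map_neg (hv : IsValOnField v) (x : AlgebraicClosure K) : v (-x) = v x :=
  hv.toAddValuation.map_neg x

theorem map_sub_swap (hv : IsValOnField v) (x y : AlgebraicClosure K) : v (x - y) = v (y - x) :=
  hv.toAddValuation.map_sub_swap x y

theorem map_add_eq_of_lt_left (hv : IsValOnField v) {x y : AlgebraicClosure K} (h : v x < v y) :
    v (x + y) = v x :=
  hv.toAddValuation.map_add_eq_of_lt_left h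

theorem min_le_map_sub_add_sub (hv : IsValOnField v) (x y z : AlgebraicClosure K) :
    min (v (x - y)) (v (y - z)) ≤ v (x - z) := by
  simpa only [sub_add_sub_cancel] using hv.min_le_add (x - y) (y - z)

end IsValOnField

section Balls

variable {v : AlgebraicClosure K → WithTop Λ}

theorem mem_cBall_self (hv : IsValOnField v) (a : AlgebraicClosure K) (δ : Λ) :
    a ∈ cBall v a δ := by
  simp [cBall, hv.map_zero]

theorem cBall_subset_cBall (a : AlgebraicClosure K) {γ δ : Λ} (h : γ ≤ δ) :
    cBall v a δ ⊆ cBall v a γ :=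
  fun _ hx => (WithTop.coe_le_coe.2 h).trans hx

theorem mem_cBall_trans (hv : IsValOnField v) {x y z : AlgebraicClosure K} {ε : Λ}
    (hxy : x ∈ cBall v y ε) (hyz : y ∈ cBall v z ε) : x ∈ cBall v z ε :=
  (le_min hxy hyz).trans (hv.min_le_map_sub_add_sub x y z)

theorem mem_cBall_comm (hv : IsValOnField v) {x y : AlgebraicClosure K} {ε : Λ} :
    x ∈ cBall v y ε ↔ y ∈ cBall v x ε := by
  simp only [cBall, Set.mem_ofPred_eq, hv.map_sub_swap x y]

theorem cBall_subset_of_mem (hv : IsValOnField v) {a b : AlgebraicClosure K} {γ ε : Λ}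
    (ha : a ∈ cBall v b ε) (h : ε ≤ γ) : cBall v a γ ⊆ cBall v b ε :=
  fun _ hx => mem_cBall_trans hv (cBall_subset_cBall a h hx) ha

end Balls

section Degree

theorem degKSet_le_degK {S : Set (AlgebraicClosure K)} {c : AlgebraicClosure K} (hc : c ∈ S) :
    degKSet K S ≤ degK K c :=
  Nat.sInf_le ⟨c, hc, rfl⟩

theorem exists_degK_eq_degKSet {S : Set (AlgebraicClosure K)} (hS : S.Nonempty) :
    ∃ c ∈ S, degK K c = degKSet K S :=
  Nat.sInf_mem (hS.image _)

theorem degKSet_eq_of_subset {S T : Set (AlgebraicClosure K)} (hST : S ⊆ T)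
    {c : AlgebraicClosure K} (hc : c ∈ S) (hcT : degK K c = degKSet K T) :
    degKSet K S = degKSet K T := by
  obtain ⟨c', hc'S, hc'⟩ := exists_degK_eq_degKSet ⟨c, hc⟩
  refine le_antisymm (hcT ▸ degKSet_le_degK hc) ?_
  exact hc' ▸ degKSet_le_degK (hST hc'S)

end Degree

theorem apply_add_eq_left_of_lt {G : Type*} [AddGroup G] {w : G → WithTop Λ}
    (hneg : ∀ x, w (-x) = w x) (hadd : ∀ x y, min (w x) (w y) ≤ w (x + y)) {x y : G}
    (h : w x < w y) : w (x + y) = w x := by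
  refine le_antisymm ?_ (min_eq_left h.le ▸ hadd x y)
  by_contra! hlt
  have := hadd (x + y) (-y)
  rw [add_neg_cancel_right, hneg] at this
  exact this.not_gt (lt_min hlt h)

section MonoVal

variable {v : AlgebraicClosure K → WithTop Λ} (a : AlgebraicClosure K) (δ : Λ)

theorem le_monoVal_iff (hv : IsValOnField v) {f : (AlgebraicClosure K)[X]} {x : WithTop Λ} :
    x ≤ monoVal v a δ f ↔
      ∀ k, x ≤ v ((taylor a f).coeff k) + ((k • δ : Λ) : WithTop Λ) := by
  refine ⟨fun h k => ?_, fun h => Finset.le_inf fun k _ => h k⟩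
  rcases le_or_gt k f.natDegree with hk | hk
  · exact h.trans (Finset.inf_le (Finset.mem_range_succ_iff.2 hk))
  · rw [coeff_eq_zero_of_natDegree_lt (by rwa [natDegree_taylor]), hv.map_zero, top_add]
    exact le_top

theorem monoVal_le (hv : IsValOnField v) (f : (AlgebraicClosure K)[X]) (k : ℕ) :
    monoVal v a δ f ≤ v ((taylor a f).coeff k) + ((k • δ : Λ) : WithTop Λ) :=
  (le_monoVal_iff a δ hv).1 le_rfl k

theorem exists_eq_monoVal (f : (AlgebraicClosure K)[X]) :
    ∃ k, v ((taylor a f).coeff k) + ((k • δ : Λ) : WithTop Λ) = monoVal v a δ f := by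
  obtain ⟨k, -, hk⟩ := Finset.exists_mem_eq_inf _ Finset.nonempty_range_add_one
    fun k => v ((taylor a f).coeff k) + ((k • δ : Λ) : WithTop Λ)
  exact ⟨k, hk.symm⟩

theorem monoVal_eq_top_iff (hv : IsValOnField v) {f : (AlgebraicClosure K)[X]} :
    monoVal v a δ f = ⊤ ↔ f = 0 := by
  refine ⟨fun h => ?_, fun h => top_le_iff.1 ((le_monoVal_iff a δ hv).2 fun k => ?_)⟩
  · by_contra hf
    have hlc : (taylor a f).coeff f.natDegree ≠ 0 := by
      rwa [coeff_taylor_natDegree, leadingCoeff_ne_zero]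
    have := monoVal_le a δ hv f f.natDegree
    rw [h, top_le_iff, WithTop.add_eq_top, hv.eq_top_iff] at this
    exact this.elim hlc WithTop.coe_ne_top
  · simp [h, hv.map_zero]

theorem exists_greatest_eq_monoVal (hv : IsValOnField v) {f : (AlgebraicClosure K)[X]}
    (hf : f ≠ 0) :
    ∃ i, v ((taylor a f).coeff i) + ((i • δ : Λ) : WithTop Λ) = monoVal v a δ f ∧
      ∀ k, i < k →
        monoVal v a δ f < v ((taylor a f).coeff k) + ((k • δ : Λ) : WithTop Λ) := by
  classical
  have hne : monoVal v a δ f ≠ ⊤ := (monoVal_eq_top_iff a δ hv).not.2 hf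
  let P i := v ((taylor a f).coeff i) + ((i • δ : Λ) : WithTop Λ) = monoVal v a δ f
  have hdeg : ∀ k, P k → k ≤ f.natDegree := fun k hk => by
    by_contra! hlt
    change v _ + _ = _ at hk
    rw [coeff_eq_zero_of_natDegree_lt (by rwa [natDegree_taylor]), hv.map_zero, top_add] at hk
    exact hne hk.symm
  obtain ⟨j, hj⟩ := exists_eq_monoVal a δ f
  refine ⟨Nat.findGreatest P f.natDegree, Nat.findGreatest_spec (P := P) (hdeg j hj) hj,
    fun k hk => (monoVal_le a δ hv f k).lt_of_ne fun heq => ?_⟩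
  exact Nat.findGreatest_is_greatest hk (hdeg k heq.symm) heq.symm

theorem monoVal_neg (hv : IsValOnField v) (f : (AlgebraicClosure K)[X]) :
    monoVal v a δ (-f) = monoVal v a δ f := by
  simp [monoVal, hv.map_neg]

theorem min_le_monoVal_add (hv : IsValOnField v) (f g : (AlgebraicClosure K)[X]) :
    min (monoVal v a δ f) (monoVal v a δ g) ≤ monoVal v a δ (f + g) := by
  refine (le_monoVal_iff a δ hv).2 fun k => ?_
  rw [map_add, coeff_add]
  calc min (monoVal v a δ f) (monoVal v a δ g)
      ≤ min (v ((taylor a f).coeff k) + ((k • δ : Λ) : WithTop Λ))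
          (v ((taylor a g).coeff k) + ((k • δ : Λ) : WithTop Λ)) :=
        min_le_min (monoVal_le a δ hv f k) (monoVal_le a δ hv g k)
    _ = min (v ((taylor a f).coeff k)) (v ((taylor a g).coeff k)) +
          ((k • δ : Λ) : WithTop Λ) :=
        min_add_add_right _ _ _
    _ ≤ _ := add_le_add_left (hv.min_le_add _ _) _

theorem monoVal_add_eq_of_lt_left (hv : IsValOnField v) {f g : (AlgebraicClosure K)[X]}
    (h : monoVal v a δ f < monoVal v a δ g) : monoVal v a δ (f + g) = monoVal v a δ f :=
  apply_add_eq_left_of_lt (monoVal_neg a δ hv) (min_le_monoVal_add a δ hv) h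

theorem monoVal_one (hv : IsValOnField v) : monoVal v a δ 1 = 0 := by
  simp [monoVal, hv.map_one]

theorem monoVal_C_mul (hv : IsValOnField v) (e : AlgebraicClosure K) (f : (AlgebraicClosure K)[X]) :
    monoVal v a δ (C e * f) = v e + monoVal v a δ f := by
  have hterm : ∀ k, v ((taylor a (C e * f)).coeff k) + ((k • δ : Λ) : WithTop Λ) =
      v e + (v ((taylor a f).coeff k) + ((k • δ : Λ) : WithTop Λ)) := fun k => by
    rw [taylor_mul, taylor_C, coeff_C_mul, hv.map_mul, add_assoc]
  obtain ⟨k, hk⟩ := exists_eq_monoVal a δ f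
  refine le_antisymm ((monoVal_le a δ hv _ k).trans_eq (by rw [hterm, hk])) ?_
  exact (le_monoVal_iff a δ hv).2 fun k => hterm k ▸ add_le_add_right (monoVal_le a δ hv f k) _

theorem monoVal_X_sub_C_self_mul (hv : IsValOnField v) (f : (AlgebraicClosure K)[X]) :
    monoVal v a δ ((X - C a) * f) = δ + monoVal v a δ f := by
  have hterm : ∀ k, v ((taylor a ((X - C a) * f)).coeff (k + 1)) +
      (((k + 1) • δ : Λ) : WithTop Λ) =
        δ + (v ((taylor a f).coeff k) + ((k • δ : Λ) : WithTop Λ)) :=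
    fun k => by
      rw [taylor_mul, map_sub, taylor_X, taylor_C, add_sub_cancel_right, coeff_X_mul, succ_nsmul',
        WithTop.coe_add, add_left_comm]
  obtain ⟨k, hk⟩ := exists_eq_monoVal a δ f
  refine le_antisymm ((monoVal_le a δ hv _ (k + 1)).trans_eq (by rw [hterm, hk])) ?_
  refine (le_monoVal_iff a δ hv).2 fun k => ?_
  cases k with
  | zero => simp [taylor_mul, hv.map_zero]
  | succ k => exact hterm k ▸ add_le_add_right (monoVal_le a δ hv f k) _

end MonoVal

section MonoValLinear

variable {v : AlgebraicClosure K → WithTop Λ} (a : AlgebraicClosure K) (δ : Λ)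

/-- `v_{a,δ}(x - c) = min (v (c - a)) δ`, as an element of `Λ`. -/
def valXSubC (v : AlgebraicClosure K → WithTop Λ) (a : AlgebraicClosure K) (δ : Λ)
    (c : AlgebraicClosure K) : Λ :=
  min ((v (c - a)).untopD δ) δ

theorem coe_valXSubC (c : AlgebraicClosure K) :
    ((valXSubC v a δ c : Λ) : WithTop Λ) = min (v (c - a)) δ := by
  unfold valXSubC
  cases v (c - a) <;> simp

theorem valXSubC_le (c : AlgebraicClosure K) : valXSubC v a δ c ≤ δ := min_le_right _ _

theorem mem_cBall_valXSubC (c : AlgebraicClosure K) : c ∈ cBall v a (valXSubC v a δ c) :=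
  (coe_valXSubC a δ c).trans_le (min_le_left _ _)

theorem monoVal_X_sub_C_mul (hv : IsValOnField v) (c : AlgebraicClosure K)
    (f : (AlgebraicClosure K)[X]) :
    monoVal v a δ ((X - C c) * f) = valXSubC v a δ c + monoVal v a δ f := by
  rcases eq_or_ne f 0 with rfl | hf
  · simp only [mul_zero, (monoVal_eq_top_iff a δ hv).2, add_top]
  have hne : monoVal v a δ f ≠ ⊤ := (monoVal_eq_top_iff a δ hv).not.2 hf
  have hsplit : (X - C c) * f = (X - C a) * f + C (a - c) * f := by rw [map_sub]; ring
  rw [coe_valXSubC]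
  rcases lt_or_ge (v (c - a)) δ with hlt | hle
  · have hCX : monoVal v a δ (C (a - c) * f) < monoVal v a δ ((X - C a) * f) := by
      rw [monoVal_C_mul a δ hv, monoVal_X_sub_C_self_mul a δ hv, hv.map_sub_swap]
      exact WithTop.add_lt_add_right hne hlt
    rw [min_eq_left hlt.le, hsplit, add_comm, monoVal_add_eq_of_lt_left a δ hv hCX,
      monoVal_C_mul a δ hv, hv.map_sub_swap]
  rw [min_eq_right hle]
  refine le_antisymm ?_ ?_
  · -- at the last index `i` where `v_{a,δ}(f)` is attained, the `x`-shifted term wins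
    obtain ⟨i, hi, hgt⟩ := exists_greatest_eq_monoVal a δ hv hf
    set G := taylor a f
    have hcoeff : (taylor a ((X - C c) * f)).coeff (i + 1) =
        G.coeff i + (a - c) * G.coeff (i + 1) := by
      rw [taylor_mul, map_sub, taylor_X, taylor_C, show X + C a - C c = X + C (a - c) by
        rw [map_sub]; ring, add_mul, coeff_add, coeff_X_mul, coeff_C_mul]
    have hshift : v (G.coeff i) + (((i + 1) • δ : Λ) : WithTop Λ) = δ + monoVal v a δ f := by
      rw [succ_nsmul', WithTop.coe_add, add_left_comm, hi]
    have hlt : v (G.coeff i) < v ((a - c) * G.coeff (i + 1)) := by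
      refine (WithTop.add_lt_add_iff_right (WithTop.coe_ne_top (a := ((i + 1) • δ : Λ)))).1 ?_
      rw [hshift, hv.map_mul, add_assoc, hv.map_sub_swap]
      exact WithTop.add_lt_add_of_le_of_lt WithTop.coe_ne_top hle (hgt (i + 1) i.lt_succ_self)
    calc monoVal v a δ ((X - C c) * f)
        ≤ v ((taylor a ((X - C c) * f)).coeff (i + 1)) + (((i + 1) • δ : Λ) : WithTop Λ) :=
          monoVal_le a δ hv _ (i + 1)
      _ = δ + monoVal v a δ f := by rw [hcoeff, hv.map_add_eq_of_lt_left hlt, hshift]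
  · have h := min_le_monoVal_add a δ hv ((X - C a) * f) (C (a - c) * f)
    rw [← hsplit, monoVal_X_sub_C_self_mul a δ hv, monoVal_C_mul a δ hv, hv.map_sub_swap,
      min_eq_left (add_le_add_left hle _)] at h
    exact h

end MonoValLinear

theorem cBall_subset_of_valXSubC_le {v : AlgebraicClosure K → WithTop Λ} (hv : IsValOnField v)
    {a b c : AlgebraicClosure K} {δ ε γ : Λ} (hsub : cBall v a δ ⊆ cBall v b ε)
    (hc : c ∈ cBall v b ε) (hγ : valXSubC v a δ c ≤ γ) (hγδ : γ ≤ δ) :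
    cBall v a γ ⊆ cBall v b ε := by
  have ha : a ∈ cBall v b ε := hsub (mem_cBall_self hv a δ)
  rcases le_total (δ : WithTop Λ) (v (c - a)) with hδ | hδ
  · have hcδ : valXSubC v a δ c = δ :=
      WithTop.coe_injective (by rw [coe_valXSubC, min_eq_right hδ])
    rwa [le_antisymm hγδ (hcδ ▸ hγ)]
  · refine cBall_subset_of_mem hv ha (WithTop.coe_le_coe.1 ?_)
    calc (ε : WithTop Λ) ≤ v (c - a) := mem_cBall_trans hv hc ((mem_cBall_comm hv).1 ha)
      _ = valXSubC v a δ c := by rw [coe_valXSubC, min_eq_left hδ]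
      _ ≤ γ := WithTop.coe_le_coe.2 hγ

/-- `γ` is the largest of the slopes `(d 0 - d s) / s`, `s ≥ 1`, and `r` is the largest `s`
attaining it. For `d s = μ (∂_s f)` this says `γ = ε_μ(f)`. -/
structure IsMaxSlopeAt (d : ℕ → WithTop Λ) (γ : Λ) (r : ℕ) : Prop where
  ne_top : d 0 ≠ ⊤
  one_le : 1 ≤ r
  le : ∀ s, d 0 ≤ ((s • γ : Λ) : WithTop Λ) + d s
  eq : d 0 = ((r • γ : Λ) : WithTop Λ) + d r
  lt : ∀ s, r < s → d 0 < ((s • γ : Λ) : WithTop Λ) + d s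

namespace IsMaxSlopeAt

variable {d D : ℕ → WithTop Λ} {γ l : Λ} {r : ℕ}

theorem le_of_le (h : IsMaxSlopeAt d γ r) {m : Λ} (hm : γ ≤ m) (s : ℕ) :
    d 0 ≤ ((s • m : Λ) : WithTop Λ) + d s :=
  (h.le s).trans (add_le_add_left (WithTop.coe_le_coe.2 (nsmul_le_nsmul_right hm s)) _)

theorem lt_of_lt (h : IsMaxSlopeAt d γ r) {m : Λ} (hm : γ < m) {s : ℕ} (hs : 1 ≤ s) :
    d 0 < ((s • m : Λ) : WithTop Λ) + d s := by
  cases hds : d s with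
  | top => rw [add_top]; exact lt_top_iff_ne_top.2 h.ne_top
  | coe x =>
    refine (h.le s).trans_lt ?_
    rw [hds]
    exact WithTop.add_lt_add_right WithTop.coe_ne_top
      (WithTop.coe_lt_coe.2 (nsmul_lt_nsmul_right (by omega) hm))

/-- The hypotheses on `D` are those of `D s = ν (∂_s ((x - c) g))` for `d s = ν (∂_s g)` and
`ν ((x - c) h) = l + ν h`, since `∂_{k+1} ((x - c) g) = (x - c) ∂_{k+1} g + ∂_k g`. -/
theorem step (h : IsMaxSlopeAt d γ r) (h0 : D 0 = l + d 0)
    (hle : ∀ k, min (l + d (k + 1)) (d k) ≤ D (k + 1))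
    (hlt : ∀ k, l + d (k + 1) < d k → D (k + 1) = l + d (k + 1))
    (hgt : ∀ k, d k < l + d (k + 1) → D (k + 1) = d k) :
    ∃ r', IsMaxSlopeAt D (max γ l) r' := by
  have hD0 : D 0 ≠ ⊤ := h0 ▸ WithTop.add_ne_top.2 ⟨WithTop.coe_ne_top, h.ne_top⟩
  have hmin : ∀ (m : Λ) k, min ((((k + 1) • m : Λ) : WithTop Λ) + (l + d (k + 1)))
      ((((k + 1) • m : Λ) : WithTop Λ) + d k) ≤
        (((k + 1) • m : Λ) : WithTop Λ) + D (k + 1) :=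
    fun m k => (min_add_add_left _ _ _).trans_le (add_le_add_right (hle k) _)
  have hD_le : ∀ s, D 0 ≤ ((s • max γ l : Λ) : WithTop Λ) + D s := by
    rintro (_ | k)
    · simp
    refine h0 ▸ le_trans (le_min ?_ ?_) (hmin _ k)
    · rw [add_left_comm]
      exact add_le_add_right (h.le_of_le (le_max_left γ l) (k + 1)) _
    · rw [succ_nsmul', WithTop.coe_add, add_assoc]
      exact add_le_add (WithTop.coe_le_coe.2 (le_max_right γ l)) (h.le_of_le (le_max_left γ l) k)
  have hD_lt : ∀ (m : Λ) k, d 0 < (((k + 1) • m : Λ) : WithTop Λ) + d (k + 1) →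
      l + d 0 < (((k + 1) • m : Λ) : WithTop Λ) + d k →
      D 0 < (((k + 1) • m : Λ) : WithTop Λ) + D (k + 1) :=
    fun m k hA hB => by
      have hA' : l + d 0 < (((k + 1) • m : Λ) : WithTop Λ) + (l + d (k + 1)) := by
        rw [add_left_comm]
        exact WithTop.add_lt_add_left WithTop.coe_ne_top hA
      exact h0 ▸ (lt_min hA' hB).trans_le (hmin m k)
  rcases lt_trichotomy γ l with hγl | rfl | hlγ
  · -- the new factor has the largest slope, attained only at `s = 1`
    have hD1 : D 1 = d 0 := hgt 0 (by simpa using h.lt_of_lt hγl le_rfl)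
    refine ⟨1, hD0, le_rfl, hD_le, ?_, ?_⟩
    · rw [max_eq_right hγl.le, h0, hD1, one_nsmul]
    intro s hs
    obtain ⟨k, rfl⟩ : ∃ k, s = k + 2 := ⟨s - 2, by omega⟩
    rw [max_eq_right hγl.le]
    refine hD_lt l (k + 1) (h.lt_of_lt hγl (by omega)) ?_
    rw [succ_nsmul', WithTop.coe_add, add_assoc]
    exact WithTop.add_lt_add_left WithTop.coe_ne_top (h.lt_of_lt hγl (by omega))
  · -- a tie: the last index attaining the slope moves up by one
    have hr : d r < γ + d (r + 1) := by
      have := h.lt (r + 1) r.lt_succ_self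
      rw [h.eq, succ_nsmul, WithTop.coe_add, add_assoc] at this
      exact (WithTop.add_lt_add_iff_left WithTop.coe_ne_top).1 this
    rw [max_self]
    refine ⟨r + 1, hD0, by omega, by simpa using hD_le, ?_, fun s hs => ?_⟩
    · rw [h0, hgt r hr, h.eq, succ_nsmul', WithTop.coe_add, add_assoc]
    obtain ⟨k, rfl⟩ : ∃ k, s = k + 1 := ⟨s - 1, by omega⟩
    refine hD_lt γ k (h.lt (k + 1) (by omega)) ?_
    rw [succ_nsmul', WithTop.coe_add, add_assoc]
    exact WithTop.add_lt_add_left WithTop.coe_ne_top (h.lt k (by omega))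
  · -- the old maximal slope survives, attained last at the same index
    obtain ⟨k, rfl⟩ : ∃ k, r = k + 1 := ⟨r - 1, by have := h.one_le; omega⟩
    have hk1 : d (k + 1) ≠ ⊤ := fun h' => h.ne_top (by rw [h.eq, h', add_top])
    have hk : l + d (k + 1) < d k := by
      have := h.le k
      rw [h.eq, succ_nsmul, WithTop.coe_add, add_assoc,
        WithTop.add_le_add_iff_left WithTop.coe_ne_top] at this
      exact (WithTop.add_lt_add_right hk1 (WithTop.coe_lt_coe.2 hlγ)).trans_le this
    rw [max_eq_left hlγ.le]
    refine ⟨k + 1, hD0, h.one_le, by simpa [max_eq_left hlγ.le] using hD_le, ?_,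
      fun s hs => ?_⟩
    · rw [h0, hlt k hk, h.eq, add_left_comm]
    obtain ⟨k', rfl⟩ : ∃ k', s = k' + 1 := ⟨s - 1, by omega⟩
    refine hD_lt γ k' (h.lt (k' + 1) hs) ?_
    calc l + d 0 < γ + d 0 := WithTop.add_lt_add_right h.ne_top (WithTop.coe_lt_coe.2 hlγ)
      _ ≤ γ + (((k' • γ : Λ) : WithTop Λ) + d k') := add_le_add_right (h.le k') _
      _ = (((k' + 1) • γ : Λ) : WithTop Λ) + d k' := by
        rw [succ_nsmul', WithTop.coe_add, add_assoc]

end IsMaxSlopeAt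

theorem Polynomial.hasseDeriv_map {R S : Type*} [Semiring R] [Semiring S] (φ : R →+* S) (k : ℕ)
    (f : R[X]) : hasseDeriv k (f.map φ) = (hasseDeriv k f).map φ := by
  ext n
  simp [hasseDeriv_coeff, coeff_map]

theorem Polynomial.hasseDeriv_succ_X_sub_C_mul {R : Type*} [Ring R] (c : R) (g : R[X]) (k : ℕ) :
    hasseDeriv (k + 1) ((X - C c) * g) = (X - C c) * hasseDeriv (k + 1) g + hasseDeriv k g := by
  rw [hasseDeriv_mul, Finset.Nat.sum_antidiagonal_succ, hasseDeriv_zero',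
    Finset.sum_eq_single (0, k)]
  · simp
  · rintro ⟨i, j⟩ hij hne
    obtain ⟨i, rfl⟩ : ∃ i', i = i' + 1 := ⟨i - 1, by
      have := Finset.HasAntidiagonal.mem_antidiagonal.1 hij; grind⟩
    rw [map_sub, hasseDeriv_X _ (by omega), hasseDeriv_C _ _ (by omega), sub_zero, zero_mul]
  · simp

section ProductOfLinearFactors

variable {A : Type*} [CommRing A] {ν : A[X] → WithTop Λ} (l : A → Λ)

theorem isMaxSlopeAt_X_sub_C (hl : ∀ c h, ν ((X - C c) * h) = l c + ν h) (hν0 : ν 0 = ⊤)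
    (hν1 : ν 1 = 0) (c : A) :
    IsMaxSlopeAt (fun s => ν (hasseDeriv s (X - C c))) (l c) 1 := by
  have h0 : ν (X - C c) = l c := by simpa [hν1] using hl c 1
  have h2 : ∀ k, ν (hasseDeriv (k + 1 + 1) (X - C c)) = ⊤ := fun k => by
    rw [map_sub, hasseDeriv_X _ (by omega), hasseDeriv_C _ _ (by omega), sub_zero, hν0]
  refine ⟨by simp [h0], le_rfl, ?_, by simp [h0, hν1], fun s hs => ?_⟩
  · rintro (_ | _ | k)
    · simp
    · simp [h0, hν1]
    · simp only [h2, add_top, le_top]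
  · obtain ⟨k, rfl⟩ : ∃ k, s = k + 1 + 1 := ⟨s - 2, by omega⟩
    simp only [h2, add_top, hasseDeriv_zero', h0]
    exact WithTop.coe_lt_top _

theorem IsMaxSlopeAt.X_sub_C_mul (hl : ∀ c h, ν ((X - C c) * h) = l c + ν h)
    (hadd : ∀ f g, min (ν f) (ν g) ≤ ν (f + g))
    (hlt : ∀ f g, ν f < ν g → ν (f + g) = ν f) {g : A[X]} {γ : Λ} {r : ℕ}
    (h : IsMaxSlopeAt (fun s => ν (hasseDeriv s g)) γ r) (c : A) :
    ∃ r', IsMaxSlopeAt (fun s => ν (hasseDeriv s ((X - C c) * g))) (max γ (l c)) r' := by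
  refine h.step (by simp [hl]) (fun k => ?_) (fun k hk => ?_) (fun k hk => ?_) <;>
    simp only [hasseDeriv_succ_X_sub_C_mul]
  · have := hadd ((X - C c) * hasseDeriv (k + 1) g) (hasseDeriv k g)
    rwa [hl] at this
  · rw [hlt _ _ (by simpa [hl] using hk), hl]
  · rw [add_comm, hlt _ _ (by simpa [hl] using hk)]

theorem exists_isMaxSlopeAt_prod_X_sub_C (hl : ∀ c h, ν ((X - C c) * h) = l c + ν h)
    (hν0 : ν 0 = ⊤) (hν1 : ν 1 = 0)
    (hadd : ∀ f g, min (ν f) (ν g) ≤ ν (f + g))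
    (hlt : ∀ f g, ν f < ν g → ν (f + g) = ν f) {R : Multiset A} (hR : R ≠ 0) :
    ∃ c ∈ R, (∀ c' ∈ R, l c' ≤ l c) ∧
      ∃ r, IsMaxSlopeAt (fun s => ν (hasseDeriv s (R.map fun c => X - C c).prod)) (l c) r := by
  induction R using Multiset.induction_on with
  | empty => exact absurd rfl hR
  | cons c t ih =>
    rw [Multiset.map_cons, Multiset.prod_cons]
    rcases eq_or_ne t 0 with rfl | ht
    · exact ⟨c, Multiset.mem_cons_self c 0, by simp, 1,
        by simpa using isMaxSlopeAt_X_sub_C l hl hν0 hν1 c⟩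
    obtain ⟨c₀, hc₀, hmax, r, hr⟩ := ih ht
    obtain ⟨r', hr'⟩ := hr.X_sub_C_mul l hl hadd hlt c
    rcases le_total (l c) (l c₀) with hc | hc
    · exact ⟨c₀, Multiset.mem_cons_of_mem hc₀, Multiset.forall_mem_cons.2 ⟨hc, hmax⟩, r',
        max_eq_left hc ▸ hr'⟩
    · exact ⟨c, Multiset.mem_cons_self c t,
        Multiset.forall_mem_cons.2 ⟨le_rfl, fun c' hc' => (hmax c' hc').trans hc⟩, r',
        max_eq_right hc ▸ hr'⟩

end ProductOfLinearFactors

theorem IsMaxSlopeAt.isEpsilon {μ : K[X] → WithTop Λ} (hμ0 : μ 0 = ⊤) {f : K[X]} {γ : Λ}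
    {r : ℕ}
    (h : IsMaxSlopeAt (fun s => μ (hasseDeriv s f)) γ r) : IsEpsilon μ f γ := by
  have hle := h.le
  have heq := h.eq
  simp only [hasseDeriv_zero'] at hle heq
  refine ⟨fun s _ _ => hle s, r, h.one_le, fun h0 => h.ne_top ?_, heq⟩
  rw [hasseDeriv_zero', heq, h0, hμ0, add_top]

theorem IsMaxSlopeAt.isEpsilon_resK {ν : (AlgebraicClosure K)[X] → WithTop Λ}
    (hν0 : ν 0 = ⊤) {f : K[X]} {γ : Λ} {r : ℕ}
    (h : IsMaxSlopeAt (fun s => ν (hasseDeriv s (f.map (algebraMap K (AlgebraicClosure K)))))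
      γ r) :
    IsEpsilon (resK ν) f γ :=
  IsMaxSlopeAt.isEpsilon (by simpa [resK] using hν0) (by simpa only [resK, hasseDeriv_map] using h)

theorem exists_minpoly_eq_isMaxSlopeAt {v : AlgebraicClosure K → WithTop Λ} (hv : IsValOnField v)
    (a : AlgebraicClosure K) (δ : Λ) (c : AlgebraicClosure K) :
    ∃ c', minpoly K c' = minpoly K c ∧ valXSubC v a δ c ≤ valXSubC v a δ c' ∧
      ∃ r, IsMaxSlopeAt (fun s => monoVal v a δ
        (hasseDeriv s ((minpoly K c).map (algebraMap K (AlgebraicClosure K)))))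
        (valXSubC v a δ c') r := by
  have hc : IsIntegral K c := Algebra.IsIntegral.isIntegral c
  set F := (minpoly K c).map (algebraMap K (AlgebraicClosure K))
  have hF : F = (F.roots.map fun c => X - C c).prod :=
    (IsAlgClosed.splits F).eq_prod_roots_of_monic ((minpoly.monic hc).map _)
  have hroot : ∀ {c'}, c' ∈ F.roots ↔ aeval c' (minpoly K c) = 0 := by
    simp [F, mem_roots_map (minpoly.ne_zero hc), aeval_def]
  have hcF : c ∈ F.roots := hroot.2 (minpoly.aeval K c)
  have hR : F.roots ≠ 0 := by rintro h; simp [h] at hcF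
  obtain ⟨c', hc', hmax, r, hr⟩ := exists_isMaxSlopeAt_prod_X_sub_C (valXSubC v a δ)
    (monoVal_X_sub_C_mul a δ hv) ((monoVal_eq_top_iff a δ hv).2 rfl) (monoVal_one a δ hv)
    (min_le_monoVal_add a δ hv) (fun _ _ => monoVal_add_eq_of_lt_left a δ hv) hR
  exact ⟨c', ((minpoly.eq_iff_aeval_minpoly_eq_zero hc).2 (hroot.1 hc')).symm,
    hmax c hcF, r, hF ▸ hr⟩

theorem optimalBallsCofinal_general
    (v : AlgebraicClosure K → WithTop Λ) (hv : IsValOnField v)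
    (a : AlgebraicClosure K) (δ : Λ) (m : ℕ)
    (b : AlgebraicClosure K) (ε : Λ)
    (hsub : cBall v a δ ⊆ cBall v b ε)
    (hdeg : degKSet K (cBall v b ε) = m) :
    ∃ (b' : AlgebraicClosure K) (γ' : Λ),
      cBall v b' γ' ⊆ cBall v b ε ∧
      cBall v a δ ⊆ cBall v b' γ' ∧
      degKSet K (cBall v b' γ') = m ∧
      ∃ c ∈ MinK K (cBall v b' γ'),
        IsEpsilon (resK (monoVal v a δ)) (minpoly K c) γ' := by
  obtain ⟨c, hcB, hc⟩ := exists_degK_eq_degKSet ⟨b, mem_cBall_self hv b ε⟩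
  obtain ⟨c', hc'c, hcc', r, hr⟩ := exists_minpoly_eq_isMaxSlopeAt hv a δ c
  have hB' : cBall v a (valXSubC v a δ c') ⊆ cBall v b ε :=
    cBall_subset_of_valXSubC_le hv hsub hcB hcc' (valXSubC_le a δ c')
  have hc' : c' ∈ cBall v a (valXSubC v a δ c') := mem_cBall_valXSubC a δ c'
  have hdegc' : degK K c' = degKSet K (cBall v b ε) := by rw [degK, hc'c, ← hc]; rfl
  have hdeg' := degKSet_eq_of_subset hB' hc' hdegc'
  refine ⟨a, _, hB', cBall_subset_cBall a (valXSubC_le a δ c'), hdeg'.trans hdeg, c',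
    ⟨hc', hdegc'.trans hdeg'.symm⟩, ?_⟩
  rw [hc'c]
  exact hr.isEpsilon_resK ((monoVal_eq_top_iff a δ hv).2 rfl)

/-- cofinality of μ-optimal balls: let `μ = res_K(v_{a,δ})`. Every closed ball
`B ⊇ B(a,δ)` with `deg_K B = m` contains a closed ball `B' = B(b',γ')` with
`B ⊇ B' ⊇ B(a,δ)`, `deg_K B' = m`, and `B'` μ-optimal, i.e. `ε_μ(p_K(c)) = γ'` for some
`c ∈ Min_K B'`. -/
theorem optimalBallsCofinal
    (v : AlgebraicClosure K → WithTop Λ) (hv : IsValOnField v)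
    (hdiv : IsDivisible Λ)
    (a : AlgebraicClosure K) (δ : Λ) (m : ℕ)
    (b : AlgebraicClosure K) (ε : Λ)
    (hsub : cBall v a δ ⊆ cBall v b ε)
    (hdeg : degKSet K (cBall v b ε) = m) :
    ∃ (b' : AlgebraicClosure K) (γ' : Λ),
      cBall v b' γ' ⊆ cBall v b ε ∧
      cBall v a δ ⊆ cBall v b' γ' ∧
      degKSet K (cBall v b' γ') = m ∧
      ∃ c ∈ MinK K (cBall v b' γ'),
        IsEpsilon (resK (monoVal v a δ)) (minpoly K c) γ' :=
  optimalBallsCofinal_general v hv a δ m b ε hsub hdeg
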